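/- The sequent ◇₁⊤ ⊢ ◇₁⊤ ∧ ◇₀◇₁⊤ is not derivable in RC∇ (assuming the irreflexivity property A ⊬ ◇ₙA); consequently ◇₁A ∧ ∇₀B ⊢ ◇₁(A ∧ ∇₀B) fails in RC∇ for A = ⊤, B = ◇₁⊤, and hence RC∇ is Kripke incomplete. -/

import Mathlib

/-- Strictly positive formulas of RC∇: built from ⊤, variables, ∧, ◇ₙ and ∇ₙ. -/
inductive Fm : Type
  | top : Fm
  | var : ℕ → Fm
  | and : Fm → Fm → Fm
  | dia : ℕ → Fm → Fm
  | nab : ℕ → Fm → Fm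

/-- Derivability of sequents `A ⊢ B` in RC∇. -/
inductive Prf : Fm → Fm → Prop
  | refl (A) : Prf A A
  | top (A) : Prf A .top
  | cut {A B C} : Prf A B → Prf B C → Prf A C
  | andL (A B) : Prf (.and A B) A
  | andR (A B) : Prf (.and A B) B
  | andI {A B C} : Prf A B → Prf A C → Prf A (.and B C)
  | diaMono {A B} (n) : Prf A B → Prf (.dia n A) (.dia n B)
  | diaTrans (n A) : Prf (.dia n (.dia n A)) (.dia n A)
  | diaDown {m n} (A) : m < n → Prf (.dia n A) (.dia m A)
  | diaJ {m n} (A B) : m < n →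
      Prf (.and (.dia n A) (.dia m B)) (.dia n (.and A (.dia m B)))
  | nabMono {A B} (n) : Prf A B → Prf (.nab n A) (.nab n B)
  | nabTrans (n A) : Prf (.nab n (.nab n A)) (.nab n A)
  | nabDown {m n} (A) : m < n → Prf (.nab n A) (.nab m A)
  | nabJ {m n} (A B) : m < n →
      Prf (.and (.nab n A) (.nab m B)) (.nab n (.and A (.nab m B)))
  | nabIntro (n A) : Prf A (.nab n A)
  | diaNab (n A) : Prf (.dia n A) (.nab n A)
  | diaNabAbs {m n} (A) : m ≤ n → Prf (.dia m (.nab n A)) (.dia m A)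
  | nabDiaAbs {m n} (A) : m ≤ n → Prf (.nab n (.dia m A)) (.dia m A)

/-- The formula contains no propositional variables. -/
def VarFree : Fm → Prop
  | .top => True
  | .var _ => False
  | .and A B => VarFree A ∧ VarFree B
  | .dia _ A => VarFree A
  | .nab _ A => VarFree A

/-- Kripke satisfaction for RC∇-formulas. -/
def Sat {W : Type} (R S : ℕ → W → W → Prop) (v : ℕ → W → Prop) : W → Fm → Prop
  | _, .top => True
  | w, .var p => v p w
  | w, .and A B => Sat R S v w A ∧ Sat R S v w B
  | w, .dia n A => ∃ u, R n w u ∧ Sat R S v u A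
  | w, .nab n A => ∃ u, S n w u ∧ Sat R S v u A

/-- Frame conditions for Kripke frames validating the axioms of RC∇. -/
def IsRCnFrame {W : Type} (R S : ℕ → W → W → Prop) : Prop :=
  (∀ n, Transitive (R n)) ∧ (∀ m n, m < n → ∀ x y, R n x y → R m x y) ∧
  (∀ m n, m < n → ∀ x y z, R n z x → R m z y → R m x y) ∧
  (∀ n, Transitive (S n)) ∧ (∀ n x, S n x x) ∧
  (∀ m n, m < n → ∀ x y, S n x y → S m x y) ∧
  (∀ m n, m < n → ∀ x y z, S n z x → S m z y → S m x y) ∧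
  (∀ n x y, R n x y → S n x y) ∧
  (∀ m n, m ≤ n → ∀ x y z, S n x z → R m z y → R m x y) ∧
  (∀ m n, m ≤ n → ∀ x y z, R m x z → S n z y → R m x y)

/-!
The ∇-introduction rule gives `◇₁⊤ ⊢ ◇₁⊤ ∧ ∇₀◇₁⊤`, and the absorption axiom turns
`◇₁(⊤ ∧ ∇₀◇₁⊤)` into `◇₀◇₁⊤`. So a derivation of the ◇∇-junction sequent
`◇₁⊤ ∧ ∇₀◇₁⊤ ⊢ ◇₁(⊤ ∧ ∇₀◇₁⊤)` would yield `◇₁⊤ ⊢ ◇₀◇₁⊤`, contradicting irreflexivity.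
The junction sequent is nevertheless valid on every RC∇-frame: an `Rₙ`-successor and an
`S_m`-successor of the same world are linked by `S_m` for `m < n`.
-/

theorem Prf.dia_and_nab_prf_dia {m n : ℕ} (A B : Fm) (hmn : m < n) :
    Prf (.dia n (.and A (.nab m B))) (.dia m B) :=
  ((Prf.diaMono n (.andR _ _)).cut (.diaDown _ hmn)).cut (.diaNabAbs _ le_rfl)

theorem IsRCnFrame.sat_dia_and_nab {W : Type} {R S : ℕ → W → W → Prop} (hF : IsRCnFrame R S)
    (v : ℕ → W → Prop) (w : W) {m n : ℕ} (hmn : m < n) (A B : Fm)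
    (h : Sat R S v w (.and (.dia n A) (.nab m B))) :
    Sat R S v w (.dia n (.and A (.nab m B))) := by
  obtain ⟨-, -, -, -, -, -, hS_euclid, hR_sub_S, -, -⟩ := hF
  obtain ⟨⟨u, hwu, hA⟩, z, hwz, hB⟩ := h
  exact ⟨u, hwu, hA, z, hS_euclid m n hmn u z w (hR_sub_S n w u hwu) hwz, hB⟩

/-- Assuming irreflexivity: ◇₁⊤ ⊬ ◇₁⊤ ∧ ◇₀◇₁⊤; hence
◇₁A ∧ ∇₀B ⊢ ◇₁(A ∧ ∇₀B) fails for A = ⊤, B = ◇₁⊤, and RC∇ is Kripke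
incomplete: some sequent valid on all RC∇-frames is unprovable. -/
theorem stmt_19
    (irr : ∀ (A : Fm) (n : ℕ), VarFree A → ¬ Prf A (.dia n A)) :
    ¬ Prf (.dia 1 .top) (.and (.dia 1 .top) (.dia 0 (.dia 1 .top))) ∧
    ¬ Prf (.and (.dia 1 .top) (.nab 0 (.dia 1 .top)))
        (.dia 1 (.and .top (.nab 0 (.dia 1 .top)))) ∧
    ∃ A B : Fm,
      (∀ (W : Type) (R S : ℕ → W → W → Prop) (v : ℕ → W → Prop) (w : W),
        IsRCnFrame R S → Sat R S v w A → Sat R S v w B) ∧ ¬ Prf A B := by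
  have not_prf_dia_zero : ¬ Prf (.dia 1 .top) (.dia 0 (.dia 1 .top)) := irr _ 0 trivial
  have not_junction : ¬ Prf (.and (.dia 1 .top) (.nab 0 (.dia 1 .top)))
      (.dia 1 (.and .top (.nab 0 (.dia 1 .top)))) := fun h =>
    not_prf_dia_zero <| ((Prf.andI (.refl _) (.nabIntro 0 _)).cut h).cut
      (Prf.dia_and_nab_prf_dia _ _ zero_lt_one)
  refine ⟨fun h => not_prf_dia_zero (h.cut (.andR _ _)), not_junction, _, _, ?_, not_junction⟩
  exact fun W R S v w hF => hF.sat_dia_and_nab v w zero_lt_one _ _
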